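/- arXiv:1704.03748 — 2 statements merged into one kernel-verified Lean document; each statement's English description precedes it below -/
import Mathlib

section
/- Let (Ω, μ) be a finite measure space, p ∈ (1, ∞), and let f : ℝ → ℝ be continuous with f(s) → 0 as s → 0 and |f(s)| ≤ c₁ + c₂|s|^{p−1} for all s, and let F(t) = ∫₀ᵗ f(s) ds satisfy F(t)/t → +∞ as t → +∞ and F(t)/t → −∞ as t → −∞. Let (v_n) ⊂ L^p(μ) and v ∈ L^p(μ) with v_n → v in L^p(μ) and v ≠ 0 (i.e. μ({x : v(x) ≠ 0}) > 0). Then ∫_Ω F(t v_n) dμ / t → +∞ as t → ∞ uniformly in n: for every M > 0 there exist t₀ > 0 and n₀ ∈ ℕ such that ∫_Ω F(t v_n) dμ ≥ M t for every t > t₀ and every n ≥ n₀. -/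
/-!
Superlinearity and continuity of `F` give, for every `K`, a constant `C` with
`F s ≥ K |s| - C`, hence `∫ F (t vₙ) ≥ K t ‖vₙ‖₁ - C μ(Ω)`. Since `vₙ → v` in `Lᵖ ⊆ L¹`
on a finite measure space, `‖vₙ‖₁` eventually exceeds `‖v‖₁ / 2 > 0`, and `K = 4M / ‖v‖₁`
makes the right-hand side at least `M t` once `t` is large.
-/

open Filter Topology MeasureTheory
open scoped ENNReal

theorem exists_sub_le_of_tendsto_div_self {F : ℝ → ℝ} (hFc : Continuous F)
    (hFtop : Tendsto (fun t => F t / t) atTop atTop)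
    (hFbot : Tendsto (fun t => F t / t) atBot atBot) (K : ℝ) :
    ∃ C, ∀ s, K * |s| - C ≤ F s := by
  have hcocompact : Tendsto (fun s => F s - K * |s|) (cocompact ℝ) atTop := by
    rw [cocompact_eq_atBot_atTop, tendsto_sup]
    constructor
    · refine (tendsto_id.atBot_mul_atBot₀ (tendsto_atBot_add_const_right _ K hFbot)).congr' ?_
      filter_upwards [eventually_lt_atBot 0] with s hs
      rw [id, mul_add, mul_div_cancel₀ _ hs.ne, abs_of_neg hs]
      ring
    · refine (tendsto_id.atTop_mul_atTop₀ (tendsto_atTop_add_const_right _ (-K) hFtop)).congr' ?_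
      filter_upwards [eventually_gt_atTop 0] with s hs
      rw [id, mul_add, mul_div_cancel₀ _ hs.ne', abs_of_pos hs]
      ring
  have hcont : Continuous fun s => F s - K * |s| := hFc.sub (continuous_const.mul continuous_abs)
  obtain ⟨x, hx⟩ := hcont.exists_forall_le hcocompact
  exact ⟨K * |x| - F x, fun s => by linarith [hx s]⟩

theorem abs_intervalIntegral_zero_le {f : ℝ → ℝ} {p c₁ c₂ : ℝ} (hp : 1 ≤ p) (hc₂ : 0 ≤ c₂)
    (hf : ∀ s, |f s| ≤ c₁ + c₂ * |s| ^ (p - 1)) (s : ℝ) :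
    |∫ x in (0 : ℝ)..s, f x| ≤ c₁ * |s| + c₂ * |s| ^ p := by
  have hbound : ∀ x ∈ Set.uIoc 0 s, ‖f x‖ ≤ c₁ + c₂ * |s| ^ (p - 1) := by
    intro x hx
    have hxs : |x| ≤ |s| := by
      rcases Set.mem_uIoc.mp hx with h | h
      · rw [abs_of_pos h.1, abs_of_pos (h.1.trans_le h.2)]; exact h.2
      · rw [abs_of_nonpos h.2, abs_of_neg (h.1.trans_le h.2)]; linarith [h.1]
    calc ‖f x‖ ≤ c₁ + c₂ * |x| ^ (p - 1) := hf x
      _ ≤ c₁ + c₂ * |s| ^ (p - 1) := by gcongr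
  have hpow : |s| ^ p = |s| ^ (p - 1) * |s| := by
    rw [← Real.rpow_add_one' (abs_nonneg s) (by linarith), sub_add_cancel]
  calc |∫ x in (0 : ℝ)..s, f x| ≤ (c₁ + c₂ * |s| ^ (p - 1)) * |s - 0| :=
        intervalIntegral.norm_integral_le_of_norm_le_const hbound
    _ = c₁ * |s| + c₂ * |s| ^ p := by rw [sub_zero, hpow]; ring

section Lebesgue

variable {Ω : Type*} [MeasurableSpace Ω] {μ : Measure Ω}

theorem tendsto_eLpNorm_of_exponent_le [IsFiniteMeasure μ] {ι E : Type*} [NormedAddCommGroup E]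
    {l : Filter ι} {p q : ℝ≥0∞} (hpq : p ≤ q) {g : ι → Ω → E}
    (hg : ∀ i, AEStronglyMeasurable (g i) μ)
    (h : Tendsto (fun i => eLpNorm (g i) q μ) l (𝓝 0)) :
    Tendsto (fun i => eLpNorm (g i) p μ) l (𝓝 0) := by
  rcases eq_zero_or_neZero μ with rfl | _
  · simpa using tendsto_const_nhds
  have hc : μ Set.univ ^ (1 / p.toReal - 1 / q.toReal) ≠ ∞ := by
    simp [ENNReal.rpow_eq_top_iff, measure_ne_top, NeZero.ne μ]
  have hmul := ENNReal.Tendsto.mul_const h (Or.inr hc)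
  rw [zero_mul] at hmul
  exact tendsto_of_tendsto_of_tendsto_of_le_of_le tendsto_const_nhds hmul (fun _ => zero_le)
    (fun i => eLpNorm_le_eLpNorm_mul_rpow_measure_univ hpq (hg i))

theorem tendsto_integral_abs_of_tendsto_eLpNorm [IsFiniteMeasure μ] {p : ℝ≥0∞} (hp : 1 ≤ p)
    {v : Ω → ℝ} {vn : ℕ → Ω → ℝ} (hv : MemLp v p μ) (hvn : ∀ n, MemLp (vn n) p μ)
    (hconv : Tendsto (fun n => eLpNorm (vn n - v) p μ) atTop (𝓝 0)) :
    Tendsto (fun n => ∫ x, |vn n x| ∂μ) atTop (𝓝 (∫ x, |v x| ∂μ)) := by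
  have hL1 := tendsto_eLpNorm_of_exponent_le hp
    (fun n => ((hvn n).sub hv).aestronglyMeasurable) hconv
  refine tendsto_integral_of_L1' _ ((hv.integrable hp).abs).aestronglyMeasurable
    (Eventually.of_forall fun n => ((hvn n).integrable hp).abs) ?_
  refine tendsto_of_tendsto_of_tendsto_of_le_of_le tendsto_const_nhds hL1 (fun _ => zero_le)
    (fun n => eLpNorm_mono fun x => ?_)
  simpa only [Pi.sub_apply, Real.norm_eq_abs] using abs_abs_sub_abs_le (vn n x) (v x)

theorem integral_abs_pos_of_measure_ne_zero {v : Ω → ℝ} (hv : Integrable v μ)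
    (hvne : 0 < μ {x | v x ≠ 0}) : 0 < ∫ x, |v x| ∂μ := by
  rw [integral_pos_iff_support_of_nonneg (fun x => abs_nonneg (v x)) hv.abs]
  simpa [Function.support] using hvne

theorem integrable_comp_of_abs_le_add_rpow [IsFiniteMeasure μ] {F : ℝ → ℝ} (hFc : Continuous F)
    {p a b : ℝ} (hp : 1 ≤ p) (hF : ∀ s, |F s| ≤ a * |s| + b * |s| ^ p) {u : Ω → ℝ}
    (hu : MemLp u (ENNReal.ofReal p) μ) : Integrable (fun x => F (u x)) μ := by
  have hu_pow : Integrable (fun x => |u x| ^ p) μ := by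
    simpa [ENNReal.toReal_ofReal (by linarith : 0 ≤ p)] using hu.integrable_norm_rpow'
  refine Integrable.mono' ((((hu.integrable (by simpa using hp)).abs).const_mul a).add
    (hu_pow.const_mul b)) (hFc.comp_aestronglyMeasurable hu.aestronglyMeasurable) ?_
  exact Eventually.of_forall fun x => hF (u x)

theorem le_integral_comp_of_sub_le [IsFiniteMeasure μ] {F : ℝ → ℝ} {K C : ℝ}
    (hF : ∀ s, K * |s| - C ≤ F s) {u : Ω → ℝ} (hu : Integrable u μ)
    (hFu : Integrable (fun x => F (u x)) μ) :
    K * ∫ x, |u x| ∂μ - C * μ.real Set.univ ≤ ∫ x, F (u x) ∂μ := by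
  have hlin : Integrable (fun x => K * |u x| - C) μ := (hu.abs.const_mul K).sub (integrable_const C)
  calc K * ∫ x, |u x| ∂μ - C * μ.real Set.univ = ∫ x, (K * |u x| - C) ∂μ := by
        rw [integral_sub (hu.abs.const_mul K) (integrable_const C), integral_const_mul,
          integral_const, smul_eq_mul, mul_comm C]
    _ ≤ ∫ x, F (u x) ∂μ := integral_mono hlin hFu fun x => hF (u x)

end Lebesgue

theorem stmt_9_general
    {Ω : Type*} [MeasurableSpace Ω] (μ : Measure Ω) [IsFiniteMeasure μ]
    (p : ℝ) (hp : 1 < p)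
    (f : ℝ → ℝ) (hf : Continuous f)
    (c₁ c₂ : ℝ) (hc₂ : 0 < c₂)
    (hgrowth : ∀ s : ℝ, |f s| ≤ c₁ + c₂ * |s| ^ (p - 1))
    (F : ℝ → ℝ) (hF : ∀ t : ℝ, F t = ∫ s in (0 : ℝ)..t, f s)
    (hFtop : Tendsto (fun t : ℝ => F t / t) atTop atTop)
    (hFbot : Tendsto (fun t : ℝ => F t / t) atBot atBot)
    (v : Ω → ℝ) (hv : MemLp v (ENNReal.ofReal p) μ)
    (vn : ℕ → Ω → ℝ) (hvn : ∀ n, MemLp (vn n) (ENNReal.ofReal p) μ)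
    (hconv : Tendsto (fun n => eLpNorm (vn n - v) (ENNReal.ofReal p) μ) atTop (𝓝 0))
    (hvne : 0 < μ {x | v x ≠ 0}) :
    ∀ M > 0, ∃ t₀ > 0, ∃ n₀ : ℕ, ∀ t > t₀, ∀ n ≥ n₀,
      M * t ≤ ∫ x, F (t * vn n x) ∂μ := by
  intro M hM
  have hp1 : 1 ≤ ENNReal.ofReal p := ENNReal.one_le_ofReal.mpr hp.le
  have hFc : Continuous F := by
    rw [funext hF]
    exact intervalIntegral.continuous_primitive hf.intervalIntegrable 0
  have hFbound (s : ℝ) : |F s| ≤ c₁ * |s| + c₂ * |s| ^ p :=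
    hF s ▸ abs_intervalIntegral_zero_le hp.le hc₂.le hgrowth s
  have hA := integral_abs_pos_of_measure_ne_zero (hv.integrable hp1) hvne
  obtain ⟨n₀, hn₀⟩ := ((tendsto_integral_abs_of_tendsto_eLpNorm hp1 hv hvn hconv
    ).eventually_const_lt (half_lt_self hA)).exists_forall_of_atTop
  set a := (∫ x, |v x| ∂μ) / 2
  have ha : 0 < a := half_pos hA
  obtain ⟨C, hC⟩ := exists_sub_le_of_tendsto_div_self hFc hFtop hFbot (2 * M / a)
  refine ⟨max 1 (C * μ.real Set.univ / M), by positivity, n₀, fun t ht n hn => ?_⟩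
  have htpos : 0 < t := (lt_max_of_lt_left one_pos).trans ht
  have htC : C * μ.real Set.univ ≤ M * t := by
    have := (le_max_right _ _).trans_lt ht
    rw [div_lt_iff₀ hM] at this
    linarith
  calc M * t = 2 * M / a * (t * a) - M * t := by field_simp; ring
    _ ≤ 2 * M / a * (t * ∫ x, |vn n x| ∂μ) - C * μ.real Set.univ := by
        gcongr
        exact (hn₀ n hn).le
    _ = 2 * M / a * ∫ x, |t * vn n x| ∂μ - C * μ.real Set.univ := by
        simp only [abs_mul, abs_of_pos htpos, integral_const_mul]
    _ ≤ ∫ x, F (t * vn n x) ∂μ :=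
        le_integral_comp_of_sub_le hC (((hvn n).integrable hp1).const_mul t)
          (integrable_comp_of_abs_le_add_rpow hFc hp.le hFbound ((hvn n).const_mul t))

theorem stmt_9
    {Ω : Type*} [MeasurableSpace Ω] (μ : Measure Ω) [IsFiniteMeasure μ]
    (p : ℝ) (hp : 1 < p)
    (f : ℝ → ℝ) (hf : Continuous f)
    (hf0 : Tendsto f (𝓝 0) (𝓝 0))
    (c₁ c₂ : ℝ) (hc₁ : 0 < c₁) (hc₂ : 0 < c₂)
    (hgrowth : ∀ s : ℝ, |f s| ≤ c₁ + c₂ * |s| ^ (p - 1))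
    (F : ℝ → ℝ) (hF : ∀ t : ℝ, F t = ∫ s in (0 : ℝ)..t, f s)
    (hFtop : Tendsto (fun t : ℝ => F t / t) atTop atTop)
    (hFbot : Tendsto (fun t : ℝ => F t / t) atBot atBot)
    (v : Ω → ℝ) (hv : MemLp v (ENNReal.ofReal p) μ)
    (vn : ℕ → Ω → ℝ) (hvn : ∀ n, MemLp (vn n) (ENNReal.ofReal p) μ)
    (hconv : Tendsto (fun n => eLpNorm (vn n - v) (ENNReal.ofReal p) μ) atTop (𝓝 0))
    (hvne : 0 < μ {x | v x ≠ 0}) :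
    ∀ M > 0, ∃ t₀ > 0, ∃ n₀ : ℕ, ∀ t > t₀, ∀ n ≥ n₀,
      M * t ≤ ∫ x, F (t * vn n x) ∂μ :=
  stmt_9_general μ p hp f hf c₁ c₂ hc₂ hgrowth F hF hFtop hFbot v hv vn hvn hconv hvne
end

section
/- Let (Ω, μ) be a finite measure space, p ∈ (1, ∞), and let f : ℝ → ℝ be a continuous, strictly increasing function with |f(s)| ≤ c₁ + c₂|s|^{p−1} for all s ∈ ℝ. Let u ∈ L^p(μ) with μ({x : u(x) ≠ 0}) > 0. Then the map t ↦ ∫_Ω f(t u(x)) u(x) dμ(x) is strictly increasing on (0, ∞): for all 0 < s < t, ∫_Ω f(s u) u dμ < ∫_Ω f(t u) u dμ. -/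
open MeasureTheory

/-! Since `f` is increasing, `s ↦ f (s a) a` is nondecreasing for every real `a`, and strictly
increasing when `a ≠ 0` (for `a < 0` both the order of `s a, t a` and the sign of the factor `a`
flip). So `f (t u) u - f (s u) u` is nonnegative and positive exactly where `u ≠ 0`, a set of
positive measure, hence its integral is positive. The growth bound makes both integrands
integrable: `|f (r a) a| ≤ c₁ |a| + c₂ |r|^(p-1) |a|^p`, and `u ∈ Lᵖ ⊆ L¹` on a finite measure. -/

lemma Monotone.apply_mul_mul_le {f : ℝ → ℝ} (hf : Monotone f) {s t : ℝ} (hst : s ≤ t) (a : ℝ) :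
    f (s * a) * a ≤ f (t * a) * a := by
  rcases le_total 0 a with ha | ha
  · exact mul_le_mul_of_nonneg_right (hf (mul_le_mul_of_nonneg_right hst ha)) ha
  · exact mul_le_mul_of_nonpos_right (hf (mul_le_mul_of_nonpos_right hst ha)) ha

lemma StrictMono.apply_mul_mul_lt {f : ℝ → ℝ} (hf : StrictMono f) {s t a : ℝ} (hst : s < t)
    (ha : a ≠ 0) : f (s * a) * a < f (t * a) * a := by
  rcases ha.lt_or_gt with ha | ha
  · exact mul_lt_mul_of_neg_right (hf (mul_lt_mul_of_neg_right hst ha)) ha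
  · exact mul_lt_mul_of_pos_right (hf (mul_lt_mul_of_pos_right hst ha)) ha

lemma abs_apply_mul_mul_le_of_growth {f : ℝ → ℝ} {p c₁ c₂ : ℝ} (hp : p ≠ 0)
    (hgrowth : ∀ s : ℝ, |f s| ≤ c₁ + c₂ * |s| ^ (p - 1)) (r a : ℝ) :
    |f (r * a) * a| ≤ c₁ * |a| + c₂ * |r| ^ (p - 1) * |a| ^ p := by
  have hpow : |a| ^ (p - 1) * |a| = |a| ^ p := by
    conv_rhs => rw [← sub_add_cancel p 1, Real.rpow_add' (abs_nonneg a) (by simpa using hp)]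
    rw [Real.rpow_one]
  calc |f (r * a) * a| = |f (r * a)| * |a| := abs_mul _ _
    _ ≤ (c₁ + c₂ * |r * a| ^ (p - 1)) * |a| :=
        mul_le_mul_of_nonneg_right (hgrowth _) (abs_nonneg a)
    _ = c₁ * |a| + c₂ * |r| ^ (p - 1) * (|a| ^ (p - 1) * |a|) := by
        rw [abs_mul, Real.mul_rpow (abs_nonneg r) (abs_nonneg a)]; ring
    _ = c₁ * |a| + c₂ * |r| ^ (p - 1) * |a| ^ p := by rw [hpow]

lemma integrable_apply_const_mul_mul_of_growth {Ω : Type*} [MeasurableSpace Ω] {μ : Measure Ω}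
    [IsFiniteMeasure μ] {f : ℝ → ℝ} {p c₁ c₂ : ℝ} (hp : 1 ≤ p) (hf : Measurable f)
    (hgrowth : ∀ s : ℝ, |f s| ≤ c₁ + c₂ * |s| ^ (p - 1)) {u : Ω → ℝ}
    (hu : MemLp u (ENNReal.ofReal p) μ) (r : ℝ) :
    Integrable (fun x => f (r * u x) * u x) μ := by
  have hp0 : 0 < p := zero_lt_one.trans_le hp
  have hu_int : Integrable u μ := hu.integrable (by simpa using hp)
  have hu_pow : Integrable (fun x => |u x| ^ p) μ := by
    simpa [ENNReal.toReal_ofReal hp0.le] using hu.integrable_norm_rpow'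
  have hmeas : AEStronglyMeasurable (fun x => f (r * u x) * u x) μ :=
    ((hf.comp_aemeasurable (hu.aestronglyMeasurable.aemeasurable.const_mul r)).mul
      hu.aestronglyMeasurable.aemeasurable).aestronglyMeasurable
  refine ((hu_int.abs.const_mul c₁).add (hu_pow.const_mul (c₂ * |r| ^ (p - 1)))).mono' hmeas ?_
  exact .of_forall fun x => abs_apply_mul_mul_le_of_growth hp0.ne' hgrowth r (u x)

theorem stmt_10_general
    {Ω : Type*} [MeasurableSpace Ω] (μ : Measure Ω) [IsFiniteMeasure μ]
    (p : ℝ) (hp : 1 < p)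
    (f : ℝ → ℝ) (hfmono : StrictMono f)
    (c₁ c₂ : ℝ)
    (hgrowth : ∀ s : ℝ, |f s| ≤ c₁ + c₂ * |s| ^ (p - 1))
    (u : Ω → ℝ) (hu : MemLp u (ENNReal.ofReal p) μ)
    (hune : 0 < μ {x | u x ≠ 0}) :
    ∀ s t : ℝ, 0 < s → s < t →
      (∫ x, f (s * u x) * u x ∂μ) < ∫ x, f (t * u x) * u x ∂μ := by
  intro s t _ hst
  have hint : ∀ r, Integrable (fun x => f (r * u x) * u x) μ :=
    integrable_apply_const_mul_mul_of_growth hp.le hfmono.monotone.measurable hgrowth hu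
  rw [← sub_pos, ← integral_sub (hint t) (hint s)]
  refine (integral_pos_iff_support_of_nonneg (fun x => ?_) ((hint t).sub (hint s))).2 ?_
  · exact sub_nonneg.2 (hfmono.monotone.apply_mul_mul_le hst.le (u x))
  · exact hune.trans_le <| measure_mono fun x hx =>
      (sub_pos.2 (hfmono.apply_mul_mul_lt hst hx)).ne'

theorem stmt_10
    {Ω : Type*} [MeasurableSpace Ω] (μ : Measure Ω) [IsFiniteMeasure μ]
    (p : ℝ) (hp : 1 < p)
    (f : ℝ → ℝ) (hf : Continuous f) (hfmono : StrictMono f)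
    (c₁ c₂ : ℝ) (hc₁ : 0 < c₁) (hc₂ : 0 < c₂)
    (hgrowth : ∀ s : ℝ, |f s| ≤ c₁ + c₂ * |s| ^ (p - 1))
    (u : Ω → ℝ) (hu : MemLp u (ENNReal.ofReal p) μ)
    (hune : 0 < μ {x | u x ≠ 0}) :
    ∀ s t : ℝ, 0 < s → s < t →
      (∫ x, f (s * u x) * u x ∂μ) < ∫ x, f (t * u x) * u x ∂μ :=
  stmt_10_general μ p hp f hfmono c₁ c₂ hgrowth u hu hune
end
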